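/- Let β be a quadratic Pisot unit with Galois conjugate β′, and for j = 0, 1, …, ⌊β⌋−1 set φ_j(β) = β − j and φ_{⌊β⌋}(β) = 1. Let Ω ⊆ ℝ be a bounded interval with length |Ω| ∈ (1, β]. If |Ω| ∈ ( φ_j(β), φ_{j−1}(β) ) for some j ∈ {1,…,⌊β⌋}, then the distances between consecutive points of Σ_β(Ω) take exactly the three values 1, j − β′, and j + 1 − β′. If |Ω| = φ_{j−1}(β) for some j ∈ {1,…,⌊β⌋} and Ω is semi-closed (contains exactly one of its endpoints), then the distances take exactly the two values 1 and j − β′. -/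

import Mathlib

/-!
A difference `w = y - x` of two points of `Σ_β(Ω)` has conjugate `w' = y' - x'` with
`|w'| < β + 1 - j`, and `w - w' = b (β - β')` with `β - β' = √(p² ± 4) > 2`. Hence if
`0 < w < j + 1 - β'`, then `w` is a positive integer or `w = j - β'`. So the successor of `x` is
`x + 1` or `x + (j - β')` when `x' + 1` or `x' + (j - β)` lies in `Ω`, and `x + (j + 1 - β')`
otherwise, in which case the bounds on `|Ω|` put `x' + (j + 1 - β)` in `Ω`. As `ℤ + ℤβ'` is dense
(it contains the powers of `β'`, which tend to `0`), each case occurs for some `x`, except the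
last one when `|Ω| = β + 1 - j` and `Ω` is semi-closed. Finally `Σ_β(Ω)` is locally finite and
unbounded in both directions, so it is the range of a strictly increasing `ℤ`-sequence, whose
gaps are the distances from points to their successors.
-/

/-- The cut-and-project set `Σ_β(Ω) = { x ∈ ℤ + ℤβ : x′ ∈ Ω }`, where `x′ = a + bβ′`
for `x = a + bβ`. -/
def sigmaCP (β β' : ℝ) (Ω : Set ℝ) : Set ℝ :=
  {x | ∃ a b : ℤ, x = (a : ℝ) + (b : ℝ) * β ∧ (a : ℝ) + (b : ℝ) * β' ∈ Ω}

/-- `φ_j(β) = β - j` for `0 ≤ j ≤ ⌊β⌋ - 1` and `φ_{⌊β⌋}(β) = 1`. -/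
noncomputable def phiGap (β : ℝ) (j : ℤ) : ℝ :=
  if j = ⌊β⌋ then 1 else β - (j : ℝ)

open Set

section Gaps

variable {α : Type*} [AddCommGroup α] [LinearOrder α] [IsOrderedAddMonoid α]

def IsSuccGap (S : Set α) (z g : α) : Prop :=
  0 < g ∧ z + g ∈ S ∧ ∀ y ∈ S, z < y → z + g ≤ y

def consecutiveGaps (S : Set α) : Set α :=
  {g | ∃ z ∈ S, IsSuccGap S z g}

theorem IsSuccGap.eq {S : Set α} {z g h : α} (hg : IsSuccGap S z g) (hh : IsSuccGap S z h) :
    g = h := by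
  have := hg.2.2 _ hh.2.1 (lt_add_of_pos_right z hh.1)
  have := hh.2.2 _ hg.2.1 (lt_add_of_pos_right z hg.1)
  exact add_left_cancel (le_antisymm ‹z + g ≤ z + h› ‹_›)

theorem consecutiveGaps_subset {S G : Set α} (h : ∀ z ∈ S, ∃ g ∈ G, IsSuccGap S z g) :
    consecutiveGaps S ⊆ G := by
  rintro g ⟨z, hz, hg⟩
  obtain ⟨g', hg'G, hg'⟩ := h z hz
  exact hg.eq hg' ▸ hg'G

theorem setOf_sub_eq_consecutiveGaps {f : ℤ → α} (hf : StrictMono f) :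
    {g | ∃ k : ℤ, g = f (k + 1) - f k} = consecutiveGaps (range f) := by
  ext g
  constructor
  · rintro ⟨k, rfl⟩
    refine ⟨f k, mem_range_self k, sub_pos.2 (hf (lt_add_one k)), by simp, ?_⟩
    rintro _ ⟨m, rfl⟩ hkm
    simpa using hf.monotone (Int.add_one_le_of_lt (hf.lt_iff_lt.1 hkm))
  · rintro ⟨_, ⟨k, rfl⟩, hg0, ⟨m, hm⟩, hmin⟩
    have hkm : k < m := hf.lt_iff_lt.1 (by rw [hm]; exact lt_add_of_pos_right _ hg0)
    have h1 := hmin _ (mem_range_self (k + 1)) (hf (lt_add_one k))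
    have h2 := hf.monotone (Int.add_one_le_of_lt hkm)
    exact ⟨k, eq_sub_of_add_eq' (le_antisymm (hm ▸ h2) h1).symm⟩

end Gaps

theorem exists_strictMono_int_range_eq {α : Type*} [LinearOrder α] {S : Set α} (hS : S.Nonempty)
    (hfin : ∀ a b, (S ∩ Icc a b).Finite) (hmax : ∀ x ∈ S, ∃ y ∈ S, x < y)
    (hmin : ∀ x ∈ S, ∃ y ∈ S, y < x) : ∃ f : ℤ → α, StrictMono f ∧ range f = S := by
  let : LocallyFiniteOrder S := LocallyFiniteOrder.ofFiniteIcc fun a b =>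
    ((hfin a b).preimage Subtype.val_injective.injOn).subset fun x hx => ⟨x.2, hx⟩
  let := LinearLocallyFiniteOrder.succOrder S
  let := LinearLocallyFiniteOrder.predOrder S
  have : NoMaxOrder S := ⟨fun x => let ⟨y, hy, hxy⟩ := hmax x x.2; ⟨⟨y, hy⟩, hxy⟩⟩
  have : NoMinOrder S := ⟨fun x => let ⟨y, hy, hyx⟩ := hmin x x.2; ⟨⟨y, hy⟩, hyx⟩⟩
  have : Nonempty S := hS.to_subtype
  let e := orderIsoIntOfLinearSuccPredArch (ι := S)
  refine ⟨fun k => e.symm k, Subtype.strictMono_coe _ |>.comp e.symm.strictMono, ?_⟩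
  rw [range_comp', e.symm.surjective.range_eq, image_univ, Subtype.range_coe]

section Conjugation

variable {β β' : ℝ}

/-- A relation rather than a map `x ↦ x'`, so that it does not presuppose that the coordinates
`a, b` of `x` are unique. -/
def IsGaloisConj (β β' x x' : ℝ) : Prop :=
  ∃ a b : ℤ, x = a + b * β ∧ x' = a + b * β'

theorem mem_sigmaCP_iff {Ω : Set ℝ} {x : ℝ} :
    x ∈ sigmaCP β β' Ω ↔ ∃ x' ∈ Ω, IsGaloisConj β β' x x' :=
  ⟨fun ⟨a, b, hx, h⟩ => ⟨_, h, a, b, hx, rfl⟩, fun ⟨_, h, a, b, hx, hx'⟩ => ⟨a, b, hx, hx' ▸ h⟩⟩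

theorem isGaloisConj_one : IsGaloisConj β β' 1 1 :=
  ⟨1, 0, by simp, by simp⟩

theorem isGaloisConj_intCast_sub {p : ℤ} (hconj : β' = p - β) (n : ℤ) :
    IsGaloisConj β β' (n - β') (n - β) :=
  ⟨n - p, 1, by push_cast; linarith, by push_cast; linarith⟩

theorem IsGaloisConj.add {x x' y y' : ℝ} (hx : IsGaloisConj β β' x x')
    (hy : IsGaloisConj β β' y y') : IsGaloisConj β β' (x + y) (x' + y') := by
  obtain ⟨a, b, rfl, rfl⟩ := hx
  obtain ⟨a', b', rfl, rfl⟩ := hy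
  exact ⟨a + a', b + b', by push_cast; ring, by push_cast; ring⟩

theorem IsGaloisConj.neg {x x' : ℝ} (hx : IsGaloisConj β β' x x') :
    IsGaloisConj β β' (-x) (-x') := by
  obtain ⟨a, b, rfl, rfl⟩ := hx
  exact ⟨-a, -b, by push_cast; ring, by push_cast; ring⟩

theorem IsGaloisConj.sub {x x' y y' : ℝ} (hx : IsGaloisConj β β' x x')
    (hy : IsGaloisConj β β' y y') : IsGaloisConj β β' (x - y) (x' - y') := by
  simpa only [sub_eq_add_neg] using hx.add hy.neg

theorem IsGaloisConj.add_mem_sigmaCP {Ω : Set ℝ} {x x' g g' : ℝ} (hx : IsGaloisConj β β' x x')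
    (hg : IsGaloisConj β β' g g') (h : x' + g' ∈ Ω) : x + g ∈ sigmaCP β β' Ω :=
  mem_sigmaCP_iff.2 ⟨_, h, hx.add hg⟩

theorem neg_mem_sigmaCP_neg {Ω : Set ℝ} {x : ℝ} (hx : x ∈ sigmaCP β β' Ω) :
    -x ∈ sigmaCP β β' (-Ω) := by
  obtain ⟨x', hx', h⟩ := mem_sigmaCP_iff.1 hx
  exact mem_sigmaCP_iff.2 ⟨-x', by simpa using hx', h.neg⟩

theorem sigmaCP_inter_Icc_finite {Ω : Set ℝ} {c d : ℝ} (hsep : β' < β) (hΩ : Ω ⊆ Icc c d)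
    (u v : ℝ) : (sigmaCP β β' Ω ∩ Icc u v).Finite := by
  have hpos : 0 < β - β' := sub_pos.2 hsep
  let B : Set ℤ := Int.cast ⁻¹' Icc ((u - d) / (β - β')) ((v - c) / (β - β'))
  have hB : B.Finite := by simpa only [B, Int.preimage_Icc] using finite_Icc _ _
  refine (hB.biUnion fun b _ => ?_ : (⋃ b ∈ B, (fun a : ℤ => a + b * β) ''
      (Int.cast ⁻¹' Icc (u - b * β) (v - b * β))).Finite).subset ?_
  · simpa only [Int.preimage_Icc] using (finite_Icc _ _).image _
  rintro _ ⟨⟨a, b, rfl, hx'⟩, hu, hv⟩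
  obtain ⟨hc, hd⟩ := hΩ hx'
  have hb : (b : ℝ) * (β - β') = (a + b * β) - (a + b * β') := by ring
  refine mem_biUnion (x := b) ⟨?_, ?_⟩ ⟨a, ⟨?_, ?_⟩, rfl⟩
  · rw [div_le_iff₀ hpos]; linarith
  · rw [le_div_iff₀ hpos]; linarith
  · linarith
  · linarith

end Conjugation

section Density

theorem dense_addSubgroupClosure_one_of_sq {θ : ℝ} (m n : ℤ) (hsq : θ ^ 2 = m + n * θ)
    (h0 : θ ≠ 0) (h1 : |θ| < 1) : Dense (AddSubgroup.closure {1, θ} : Set ℝ) := by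
  set L := AddSubgroup.closure ({1, θ} : Set ℝ)
  have hone : (1 : ℝ) ∈ L := AddSubgroup.subset_closure (by simp)
  have hθ : θ ∈ L := AddSubgroup.subset_closure (by simp)
  have hmul : ∀ x ∈ L, θ * x ∈ L := by
    intro x hx
    induction hx using AddSubgroup.closure_induction with
    | mem x hx =>
      rcases hx with rfl | rfl
      · simpa using hθ
      · rw [← sq, hsq]
        exact add_mem (by simpa using L.zsmul_mem hone m) (by simpa using L.zsmul_mem hθ n)
    | zero => simp
    | add x y _ _ hx hy => simpa [mul_add] using add_mem hx hy
    | neg x _ hx => simpa using neg_mem hx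
  have hpow : ∀ k : ℕ, θ ^ k ∈ L := by
    intro k
    induction k with
    | zero => simpa using hone
    | succ k ih => simpa [pow_succ'] using hmul _ ih
  refine L.dense_of_not_isolated_zero fun ε hε => ?_
  obtain ⟨k, hk⟩ := exists_pow_lt_of_lt_one hε h1
  refine ⟨|θ| ^ k, ?_, pow_pos (abs_pos.2 h0) k, hk⟩
  rw [← abs_pow]
  rcases abs_choice (θ ^ k) with h | h <;> rw [h]
  · exact hpow k
  · exact neg_mem (hpow k)

theorem exists_isGaloisConj_mem_Ioo {β β' : ℝ}
    (hdense : Dense (AddSubgroup.closure {1, β'} : Set ℝ)) {lo hi : ℝ} (h : lo < hi) : ∃ x x', IsGaloisConj β β' x x' ∧ x' ∈ Ioo lo hi := by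
  obtain ⟨_, hmem, hx'⟩ := hdense.exists_between h
  obtain ⟨a, b, rfl⟩ := AddSubgroup.mem_closure_pair.1 hmem
  exact ⟨a + b * β, _, ⟨a, b, rfl, by simp⟩, hx'⟩

end Density

section QuadraticUnit

variable {β β' : ℝ} {p : ℤ}

theorem sq_conj_eq (hp : (1 ≤ p ∧ β ^ 2 = p * β + 1) ∨ (3 ≤ p ∧ β ^ 2 = p * β - 1))
    (hconj : β' = p - β) : ∃ m : ℤ, β' ^ 2 = m + p * β' := by
  subst hconj
  rcases hp with ⟨-, h⟩ | ⟨-, h⟩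
  · exact ⟨1, by push_cast; linear_combination h⟩
  · exact ⟨-1, by push_cast; linear_combination h⟩

theorem mul_conj_eq (hp : (1 ≤ p ∧ β ^ 2 = p * β + 1) ∨ (3 ≤ p ∧ β ^ 2 = p * β - 1))
    (hconj : β' = p - β) : β * β' = -1 ∨ β * β' = 1 := by
  subst hconj
  rcases hp with ⟨-, h⟩ | ⟨-, h⟩
  · exact Or.inl (by linear_combination -h)
  · exact Or.inr (by linear_combination -h)

theorem conj_ne_zero (h : β * β' = -1 ∨ β * β' = 1) : β' ≠ 0 := by
  rintro rfl
  norm_num at h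

theorem abs_conj_lt_one (hβ : 1 < β) (h : β * β' = -1 ∨ β * β' = 1) : |β'| < 1 := by
  have : β * |β'| = 1 := by
    rw [← abs_of_pos (by linarith : 0 < β), ← abs_mul]
    rcases h with h | h <;> simp [h]
  nlinarith [abs_nonneg β']

theorem two_lt_sub_conj (hβ : 1 < β)
    (hp : (1 ≤ p ∧ β ^ 2 = p * β + 1) ∨ (3 ≤ p ∧ β ^ 2 = p * β - 1)) (hconj : β' = p - β) :
    2 < β - β' := by
  subst hconj
  rcases hp with ⟨hp, h⟩ | ⟨hp, h⟩
  · have hpR : (1 : ℝ) ≤ p := by exact_mod_cast hp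
    nlinarith
  · have hpR : (3 : ℝ) ≤ p := by exact_mod_cast hp
    nlinarith

theorem floor_lt_of_conj (hconj : β' = p - β) (h0 : β' ≠ 0) (h1 : |β'| < 1) :
    (⌊β⌋ : ℝ) < β := by
  refine (Int.floor_le β).lt_of_ne fun h => h0 ?_
  have hk : β' = ((p - ⌊β⌋ : ℤ) : ℝ) := by push_cast; linarith
  rw [hk] at h1 ⊢
  exact_mod_cast Int.abs_lt_one_iff.1 (by exact_mod_cast h1)

end QuadraticUnit

section Intervals

variable {Ω : Set ℝ} {c d t ε : ℝ}

theorem ordConnected_of_Ioo_subset_of_subset_Icc (hIoo : Ioo c d ⊆ Ω) (hIcc : Ω ⊆ Icc c d) :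
    Ω.OrdConnected := by
  refine ⟨fun u hu v hv w ⟨huw, hwv⟩ => ?_⟩
  rcases huw.eq_or_lt with rfl | huw
  · exact hu
  rcases hwv.eq_or_lt with rfl | hwv
  · exact hv
  exact hIoo ⟨(hIcc hu).1.trans_lt huw, hwv.trans_le (hIcc hv).2⟩

theorem add_one_add_mem (hIoo : Ioo c d ⊆ Ω) (hIcc : Ω ⊆ Icc c d) (hlen : 1 < d - c)
    (hε : ε < 0) (hεlen : -ε < d - c) (ht : t ∈ Ω) (h1 : t + 1 ∉ Ω) (h2 : t + ε ∉ Ω) :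
    t + (1 + ε) ∈ Ω := by
  obtain ⟨htc, htd⟩ := hIcc ht
  have hd : d ≤ t + 1 := not_lt.1 fun h => h1 (hIoo ⟨by linarith, h⟩)
  have hc : t + ε ≤ c := not_lt.1 fun h => h2 (hIoo ⟨h, by linarith⟩)
  exact hIoo ⟨by linarith, by linarith⟩

theorem add_one_mem_or_add_mem (hΩ : Ω = Ico c d ∨ Ω = Ioc c d) (hε : ε ≤ 0)
    (hlen : d - c = 1 - ε) (ht : t ∈ Ω) : t + 1 ∈ Ω ∨ t + ε ∈ Ω := by
  rcases hΩ with rfl | rfl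
  · by_cases h : c ≤ t + ε
    · exact Or.inr ⟨h, by linarith [ht.2]⟩
    · exact Or.inl ⟨by linarith [ht.1], by linarith⟩
  · by_cases h : t + 1 ≤ d
    · exact Or.inl ⟨by linarith [ht.1], h⟩
    · exact Or.inr ⟨by linarith, by linarith [ht.2]⟩

theorem sub_lt_of_mem_Ico_or_Ioc (hΩ : Ω = Ico c d ∨ Ω = Ioc c d) {u v : ℝ} (hu : u ∈ Ω)
    (hv : v ∈ Ω) : v - u < d - c := by
  rcases hΩ with rfl | rfl
  · linarith [hu.1, hv.2]
  · linarith [hu.1, hv.2]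

theorem Ioo_subset_and_subset_Icc (hΩ : Ω = Icc c d ∨ Ω = Ico c d ∨ Ω = Ioc c d ∨ Ω = Ioo c d) :
    Ioo c d ⊆ Ω ∧ Ω ⊆ Icc c d := by
  rcases hΩ with rfl | rfl | rfl | rfl
  · exact ⟨Ioo_subset_Icc_self, subset_rfl⟩
  · exact ⟨Ioo_subset_Ico_self, Ico_subset_Icc_self⟩
  · exact ⟨Ioo_subset_Ioc_self, Ioc_subset_Icc_self⟩
  · exact ⟨subset_rfl, Ioo_subset_Icc_self⟩

end Intervals

section GapAnalysis

variable {β β' : ℝ} {p j : ℤ}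

theorem IsGaloisConj.eq_intCast_or_eq_sub (hconj : β' = p - β) (hβ' : β' < 1)
    (hsep : 2 < β - β') (hj : 1 ≤ j) {w w' : ℝ} (hw : IsGaloisConj β β' w w') (hpos : 0 < w)
    (hlt : w < j + 1 - β') (habs : |w'| < β + 1 - j) :
    (∃ n : ℤ, 1 ≤ n ∧ w = n ∧ w' = n) ∨ (w = j - β' ∧ w' = j - β) := by
  obtain ⟨A, B, rfl, rfl⟩ := hw
  obtain ⟨hlo, hhi⟩ := abs_lt.1 habs
  have hjR : (1 : ℝ) ≤ j := by exact_mod_cast hj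
  -- `w - w' = B (β - β')` has absolute value less than `2 (β - β')`
  have hsepB : (B : ℝ) * (β - β') = (A + B * β) - (A + B * β') := by ring
  have hB2 : B < 2 := by
    have : (B : ℝ) * (β - β') < 2 * (β - β') := by linarith
    exact_mod_cast lt_of_mul_lt_mul_right this (by linarith)
  have hBm2 : -2 < B := by
    have : (-2 : ℝ) * (β - β') < B * (β - β') := by linarith
    exact_mod_cast lt_of_mul_lt_mul_right this (by linarith)
  obtain rfl | rfl | rfl : B = -1 ∨ B = 0 ∨ B = 1 := by omega
  · have h1 : (p : ℝ) - 1 < A := by push_cast at hpos; linarith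
    have h2 : (A : ℝ) < p := by push_cast at hhi; linarith
    have : p - 1 < A := by exact_mod_cast h1
    have : A < p := by exact_mod_cast h2
    omega
  · left
    refine ⟨A, ?_, by simp, by simp⟩
    have : (0 : ℝ) < A := by simpa using hpos
    exact_mod_cast this
  · right
    have h1 : (A : ℝ) + p - j < 1 := by push_cast at hlt; linarith
    have h2 : -1 < (A : ℝ) + p - j := by push_cast at hlo; linarith
    have : A + p - j < 1 := by exact_mod_cast h1
    have : -1 < A + p - j := by exact_mod_cast h2
    have hA : (A : ℝ) = j - p := by exact_mod_cast (show A = j - p by omega)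
    constructor <;> push_cast <;> linarith

variable {Ω : Set ℝ} {c d : ℝ}

theorem isSuccGap_of_le (hconj : β' = p - β) (hβ' : β' < 1) (hsep : 2 < β - β') (hj : 1 ≤ j)
    (hIoo : Ioo c d ⊆ Ω) (hIcc : Ω ⊆ Icc c d) (hdiam : ∀ u ∈ Ω, ∀ v ∈ Ω, v - u < β + 1 - j)
    {x t g : ℝ} (hx : IsGaloisConj β β' x t) (ht : t ∈ Ω) (hpos : 0 < g)
    (hmem : x + g ∈ sigmaCP β β' Ω) (hle : g ≤ j + 1 - β') (h1 : t + 1 ∈ Ω → g ≤ 1)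
    (h2 : t + (j - β) ∈ Ω → g ≤ j - β') : IsSuccGap (sigmaCP β β' Ω) x g := by
  refine ⟨hpos, hmem, fun y hy hxy => ?_⟩
  obtain ⟨s, hs, hys⟩ := mem_sigmaCP_iff.1 hy
  rcases le_or_gt (x + (j + 1 - β')) y with h | h
  · linarith
  have habs : |s - t| < β + 1 - j := abs_sub_lt_iff.2 ⟨hdiam _ ht _ hs, hdiam _ hs _ ht⟩
  rcases (hys.sub hx).eq_intCast_or_eq_sub hconj hβ' hsep hj (by linarith) (by linarith) habs
    with ⟨n, hn, hyx, hst⟩ | ⟨hyx, hst⟩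
  · have hn' : (1 : ℝ) ≤ n := by exact_mod_cast hn
    have : t + 1 ∈ Ω :=
      (ordConnected_of_Ioo_subset_of_subset_Icc hIoo hIcc).out ht hs ⟨by linarith, by linarith⟩
    linarith [h1 this]
  · have : t + (j - β) ∈ Ω := by rwa [show t + (j - β) = s by linarith]
    linarith [h2 this]

theorem exists_isSuccGap (hconj : β' = p - β) (hβ' : β' < 1) (hsep : 2 < β - β') (hj : 1 ≤ j)
    (hjβ : (j : ℝ) < β) (hIoo : Ioo c d ⊆ Ω) (hIcc : Ω ⊆ Icc c d)
    (hdiam : ∀ u ∈ Ω, ∀ v ∈ Ω, v - u < β + 1 - j) (hlen : 1 < d - c) (hlenj : β - j < d - c)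
    {x : ℝ} (hx : x ∈ sigmaCP β β' Ω) :
    ∃ g ∈ ({1, j - β', j + 1 - β'} : Set ℝ), IsSuccGap (sigmaCP β β' Ω) x g := by
  obtain ⟨t, ht, hxt⟩ := mem_sigmaCP_iff.1 hx
  have hjR : (1 : ℝ) ≤ j := by exact_mod_cast hj
  have isSucc (g : ℝ) := isSuccGap_of_le (g := g) hconj hβ' hsep hj hIoo hIcc hdiam hxt ht
  have step1 (h : t + 1 ∈ Ω) : x + 1 ∈ sigmaCP β β' Ω :=
    hxt.add_mem_sigmaCP isGaloisConj_one h
  have step2 (h : t + (j - β) ∈ Ω) : x + (j - β') ∈ sigmaCP β β' Ω :=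
    hxt.add_mem_sigmaCP (isGaloisConj_intCast_sub hconj j) h
  by_cases h1 : t + 1 ∈ Ω <;> by_cases h2 : t + (j - β) ∈ Ω
  · rcases le_total 1 ((j : ℝ) - β') with hle | hle
    · exact ⟨1, by simp, isSucc 1 one_pos (step1 h1) (by linarith) (fun _ => le_rfl) fun _ => hle⟩
    · exact ⟨j - β', by simp, isSucc _ (by linarith) (step2 h2) (by linarith) (fun _ => hle)
        fun _ => le_rfl⟩
  · exact ⟨1, by simp, isSucc 1 one_pos (step1 h1) (by linarith) (fun _ => le_rfl)
      fun h => absurd h h2⟩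
  · exact ⟨j - β', by simp, isSucc _ (by linarith) (step2 h2) (by linarith) (fun h => absurd h h1)
      fun _ => le_rfl⟩
  · have h3 : t + (1 + (j - β)) ∈ Ω :=
      add_one_add_mem hIoo hIcc hlen (by linarith) (by linarith) ht h1 h2
    have hmem : x + (j + 1 - β') ∈ sigmaCP β β' Ω :=
      hxt.add_mem_sigmaCP (by simpa using isGaloisConj_intCast_sub hconj (j + 1))
        (by convert h3 using 1; ring)
    exact ⟨j + 1 - β', by simp, isSucc _ (by linarith) hmem le_rfl (fun h => absurd h h1)
      fun h => absurd h h2⟩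

theorem exists_strictMono_range_eq_sigmaCP (hconj : β' = p - β) (hβ' : β' < 1)
    (hsep : 2 < β - β') (hj : 1 ≤ j) (hjβ : (j : ℝ) < β) (hIoo : Ioo c d ⊆ Ω)
    (hIcc : Ω ⊆ Icc c d) (hdiam : ∀ u ∈ Ω, ∀ v ∈ Ω, v - u < β + 1 - j) (hlen : 1 < d - c)
    (hlenj : β - j < d - c) :
    ∃ x : ℤ → ℝ, StrictMono x ∧ range x = sigmaCP β β' Ω ∧
      {g | ∃ k : ℤ, g = x (k + 1) - x k} = consecutiveGaps (sigmaCP β β' Ω) := by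
  have hne : (sigmaCP β β' Ω).Nonempty :=
    ⟨_, ⌊c⌋ + 1, 0, rfl, hIoo ⟨by push_cast; linarith [Int.lt_floor_add_one c],
      by push_cast; linarith [Int.floor_le c]⟩⟩
  have hmax (x : ℝ) (hx : x ∈ sigmaCP β β' Ω) : ∃ y ∈ sigmaCP β β' Ω, x < y := by
    obtain ⟨g, -, hg0, hmem, -⟩ :=
      exists_isSuccGap hconj hβ' hsep hj hjβ hIoo hIcc hdiam hlen hlenj hx
    exact ⟨_, hmem, lt_add_of_pos_right x hg0⟩
  have hmin (x : ℝ) (hx : x ∈ sigmaCP β β' Ω) : ∃ y ∈ sigmaCP β β' Ω, y < x := by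
    obtain ⟨g, -, hg0, hmem, -⟩ := exists_isSuccGap (Ω := -Ω) (c := -d) (d := -c) hconj hβ' hsep
      hj hjβ (by rw [← neg_Ioo]; exact neg_subset_neg.2 hIoo)
      (by rw [← neg_Icc]; exact neg_subset_neg.2 hIcc)
      (fun u hu v hv => by linarith [hdiam _ hv _ hu]) (by linarith) (by linarith)
      (neg_mem_sigmaCP_neg hx)
    exact ⟨-(-x + g), by simpa using neg_mem_sigmaCP_neg hmem, by linarith⟩
  obtain ⟨x, hx, hrange⟩ := exists_strictMono_int_range_eq hne
    (sigmaCP_inter_Icc_finite (by linarith) hIcc) hmax hmin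
  exact ⟨x, hx, hrange, hrange ▸ setOf_sub_eq_consecutiveGaps hx⟩

theorem consecutiveGaps_sigmaCP_subset (hconj : β' = p - β) (hβ' : β' < 1)
    (hsep : 2 < β - β') (hj : 1 ≤ j) (hjβ : (j : ℝ) < β) (hIoo : Ioo c d ⊆ Ω)
    (hIcc : Ω ⊆ Icc c d) (hdiam : ∀ u ∈ Ω, ∀ v ∈ Ω, v - u < β + 1 - j) (hlen : 1 < d - c)
    (hlenj : β - j < d - c) :
    consecutiveGaps (sigmaCP β β' Ω) ⊆ {1, j - β', j + 1 - β'} :=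
  consecutiveGaps_subset fun _ hx =>
    exists_isSuccGap hconj hβ' hsep hj hjβ hIoo hIcc hdiam hlen hlenj hx

theorem one_mem_consecutiveGaps_sigmaCP (hconj : β' = p - β) (hβ' : β' < 1)
    (hsep : 2 < β - β') (hj : 1 ≤ j) (hjβ : (j : ℝ) < β) (hIoo : Ioo c d ⊆ Ω)
    (hIcc : Ω ⊆ Icc c d) (hdiam : ∀ u ∈ Ω, ∀ v ∈ Ω, v - u < β + 1 - j) (hlen : 1 < d - c)
    (hdense : Dense (AddSubgroup.closure {1, β'} : Set ℝ)) :
    1 ∈ consecutiveGaps (sigmaCP β β' Ω) := by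
  obtain ⟨x, t, hxt, ht⟩ := exists_isGaloisConj_mem_Ioo hdense
    (lt_min (by linarith : c < c + (β - j)) (by linarith : c < d - 1))
  have hjR : (1 : ℝ) ≤ j := by exact_mod_cast hj
  have ht1 := ht.2.trans_le (min_le_left _ _)
  have ht2 := ht.2.trans_le (min_le_right _ _)
  have htΩ : t ∈ Ω := hIoo ⟨ht.1, by linarith⟩
  refine ⟨x, mem_sigmaCP_iff.2 ⟨t, htΩ, hxt⟩, isSuccGap_of_le hconj hβ' hsep hj hIoo hIcc hdiam
    hxt htΩ one_pos (hxt.add_mem_sigmaCP isGaloisConj_one (hIoo ⟨by linarith [ht.1], by linarith⟩))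
    (by linarith) (fun _ => le_rfl) fun h => ?_⟩
  linarith [(hIcc h).1]

theorem sub_mem_consecutiveGaps_sigmaCP (hconj : β' = p - β) (hβ' : β' < 1)
    (hsep : 2 < β - β') (hj : 1 ≤ j) (hjβ : (j : ℝ) < β) (hIoo : Ioo c d ⊆ Ω)
    (hIcc : Ω ⊆ Icc c d) (hdiam : ∀ u ∈ Ω, ∀ v ∈ Ω, v - u < β + 1 - j) (hlen : 1 < d - c)
    (hlenj : β - j < d - c) (hdense : Dense (AddSubgroup.closure {1, β'} : Set ℝ)) :
    (j - β' : ℝ) ∈ consecutiveGaps (sigmaCP β β' Ω) := by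
  obtain ⟨x, t, hxt, ht⟩ := exists_isGaloisConj_mem_Ioo hdense
    (max_lt (by linarith : d - 1 < d) (by linarith : c + (β - j) < d))
  have hjR : (1 : ℝ) ≤ j := by exact_mod_cast hj
  have ht1 := (le_max_left _ _).trans_lt ht.1
  have ht2 := (le_max_right _ _).trans_lt ht.1
  have htΩ : t ∈ Ω := hIoo ⟨by linarith, ht.2⟩
  refine ⟨x, mem_sigmaCP_iff.2 ⟨t, htΩ, hxt⟩, isSuccGap_of_le hconj hβ' hsep hj hIoo hIcc hdiam
    hxt htΩ (by linarith) (hxt.add_mem_sigmaCP (isGaloisConj_intCast_sub hconj j)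
      (hIoo ⟨by linarith, by linarith [ht.2]⟩)) (by linarith) (fun h => ?_) fun _ => le_rfl⟩
  linarith [(hIcc h).2]

theorem add_one_sub_mem_consecutiveGaps_sigmaCP (hconj : β' = p - β) (hβ' : β' < 1)
    (hsep : 2 < β - β') (hj : 1 ≤ j) (hIoo : Ioo c d ⊆ Ω)
    (hIcc : Ω ⊆ Icc c d) (hdiam : ∀ u ∈ Ω, ∀ v ∈ Ω, v - u < β + 1 - j) (hlen : 1 < d - c)
    (hlenj : β - j < d - c) (hlt : d - c < β + 1 - j)
    (hdense : Dense (AddSubgroup.closure {1, β'} : Set ℝ)) :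
    (j + 1 - β' : ℝ) ∈ consecutiveGaps (sigmaCP β β' Ω) := by
  obtain ⟨x, t, hxt, ht⟩ := exists_isGaloisConj_mem_Ioo hdense
    (by linarith : d - 1 < c + (β - j))
  have hjR : (1 : ℝ) ≤ j := by exact_mod_cast hj
  have htΩ : t ∈ Ω := hIoo ⟨by linarith [ht.1], by linarith [ht.2]⟩
  refine ⟨x, mem_sigmaCP_iff.2 ⟨t, htΩ, hxt⟩, isSuccGap_of_le hconj hβ' hsep hj hIoo hIcc hdiam
    hxt htΩ (by linarith) (hxt.add_mem_sigmaCP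
      (by simpa using isGaloisConj_intCast_sub hconj (j + 1))
      (hIoo ⟨by linarith [ht.1], by linarith [ht.2]⟩)) le_rfl (fun h => ?_) fun h => ?_⟩
  · linarith [(hIcc h).2, ht.1]
  · linarith [(hIcc h).1, ht.2]

theorem add_one_sub_notMem_consecutiveGaps_sigmaCP (hconj : β' = p - β) (hβ' : β' < 1)
    (hj : 1 ≤ j) (h : ∀ t ∈ Ω, t + 1 ∈ Ω ∨ t + (j - β) ∈ Ω) :
    (j + 1 - β' : ℝ) ∉ consecutiveGaps (sigmaCP β β' Ω) := by
  rintro ⟨z, hz, -, -, hmin⟩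
  obtain ⟨t, ht, hzt⟩ := mem_sigmaCP_iff.1 hz
  have hjR : (1 : ℝ) ≤ j := by exact_mod_cast hj
  rcases h t ht with h1 | h2
  · linarith [hmin _ (hzt.add_mem_sigmaCP isGaloisConj_one h1) (by linarith)]
  · linarith [hmin _ (hzt.add_mem_sigmaCP (isGaloisConj_intCast_sub hconj j) h2) (by linarith)]

theorem consecutiveGaps_sigmaCP_eq_of_lt (hconj : β' = p - β) (hβ' : β' < 1)
    (hsep : 2 < β - β') (hj : 1 ≤ j) (hjβ : (j : ℝ) < β) (hIoo : Ioo c d ⊆ Ω)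
    (hIcc : Ω ⊆ Icc c d) (hdiam : ∀ u ∈ Ω, ∀ v ∈ Ω, v - u < β + 1 - j) (hlen : 1 < d - c)
    (hlenj : β - j < d - c) (hlt : d - c < β + 1 - j)
    (hdense : Dense (AddSubgroup.closure {1, β'} : Set ℝ)) :
    consecutiveGaps (sigmaCP β β' Ω) = {1, j - β', j + 1 - β'} :=
  (consecutiveGaps_sigmaCP_subset hconj hβ' hsep hj hjβ hIoo hIcc hdiam hlen hlenj).antisymm <|
    insert_subset
      (one_mem_consecutiveGaps_sigmaCP hconj hβ' hsep hj hjβ hIoo hIcc hdiam hlen hdense)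
      <| insert_subset
        (sub_mem_consecutiveGaps_sigmaCP hconj hβ' hsep hj hjβ hIoo hIcc hdiam hlen hlenj hdense)
      <| singleton_subset_iff.2 <| add_one_sub_mem_consecutiveGaps_sigmaCP hconj hβ' hsep hj
        hIoo hIcc hdiam hlen hlenj hlt hdense

theorem consecutiveGaps_sigmaCP_eq_of_eq (hconj : β' = p - β) (hβ' : β' < 1)
    (hsep : 2 < β - β') (hj : 1 ≤ j) (hjβ : (j : ℝ) < β) (hΩ : Ω = Ico c d ∨ Ω = Ioc c d)
    (hIoo : Ioo c d ⊆ Ω) (hIcc : Ω ⊆ Icc c d) (hdiam : ∀ u ∈ Ω, ∀ v ∈ Ω, v - u < β + 1 - j)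
    (hlen : 1 < d - c) (heq : d - c = β + 1 - j)
    (hdense : Dense (AddSubgroup.closure {1, β'} : Set ℝ)) :
    consecutiveGaps (sigmaCP β β' Ω) = {1, j - β'} := by
  have hlenj : β - j < d - c := by linarith
  have hthird := add_one_sub_notMem_consecutiveGaps_sigmaCP hconj hβ' hj
    fun t ht => add_one_mem_or_add_mem hΩ (by linarith) (by linarith) ht
  refine Subset.antisymm (fun g hg => ?_) <|
    insert_subset
      (one_mem_consecutiveGaps_sigmaCP hconj hβ' hsep hj hjβ hIoo hIcc hdiam hlen hdense)
      <| singleton_subset_iff.2 <|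
        sub_mem_consecutiveGaps_sigmaCP hconj hβ' hsep hj hjβ hIoo hIcc hdiam hlen hlenj hdense
  rcases consecutiveGaps_sigmaCP_subset hconj hβ' hsep hj hjβ hIoo hIcc hdiam hlen hlenj hg
    with rfl | rfl | rfl
  · exact mem_insert _ _
  · exact mem_insert_of_mem _ rfl
  · exact absurd hg hthird

end GapAnalysis


theorem phiGap_sub_one {β : ℝ} {j : ℤ} (hj : j ≤ ⌊β⌋) : phiGap β (j - 1) = β + 1 - j := by
  rw [phiGap, if_neg (by omega)]
  push_cast
  ring

theorem sub_lt_of_phiGap_lt {β L : ℝ} {j : ℤ} (h : phiGap β j < L) (hL : 1 < L) : β - j < L := by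
  unfold phiGap at h
  split_ifs at h with hj
  · rw [hj]
    linarith [Int.lt_floor_add_one β]
  · exact h

theorem cutProject_gap_values_general (β β' : ℝ) (p : ℤ)
    (hβ : 1 < β)
    (hp : (1 ≤ p ∧ β ^ 2 = p * β + 1) ∨ (3 ≤ p ∧ β ^ 2 = p * β - 1))
    (hβ' : β' = (p : ℝ) - β)
    (Ω : Set ℝ) (c d : ℝ)
    (hΩ : Ω = Set.Icc c d ∨ Ω = Set.Ico c d ∨ Ω = Set.Ioc c d ∨ Ω = Set.Ioo c d)
    (hlen : 1 < d - c ∧ d - c ≤ β) :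
    (∀ j : ℤ, 1 ≤ j → j ≤ ⌊β⌋ →
      phiGap β j < d - c → d - c < phiGap β (j - 1) →
      ∃ x : ℤ → ℝ, StrictMono x ∧ Set.range x = sigmaCP β β' Ω ∧
        {g : ℝ | ∃ k : ℤ, g = x (k + 1) - x k} =
          ({1, (j : ℝ) - β', (j : ℝ) + 1 - β'} : Set ℝ)) ∧
    (∀ j : ℤ, 1 ≤ j → j ≤ ⌊β⌋ →
      d - c = phiGap β (j - 1) →
      (Ω = Set.Ico c d ∨ Ω = Set.Ioc c d) →
      ∃ x : ℤ → ℝ, StrictMono x ∧ Set.range x = sigmaCP β β' Ω ∧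
        {g : ℝ | ∃ k : ℤ, g = x (k + 1) - x k} = ({1, (j : ℝ) - β'} : Set ℝ)) := by
  obtain ⟨m, hsq⟩ := sq_conj_eq hp hβ'
  have hunit := mul_conj_eq hp hβ'
  have habs := abs_conj_lt_one hβ hunit
  have hβ'1 : β' < 1 := (abs_lt.1 habs).2
  have hsep := two_lt_sub_conj hβ hp hβ'
  have hdense := dense_addSubgroupClosure_one_of_sq m p hsq (conj_ne_zero hunit) habs
  have hfloor := floor_lt_of_conj hβ' (conj_ne_zero hunit) habs
  obtain ⟨hIoo, hIcc⟩ := Ioo_subset_and_subset_Icc hΩ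
  refine ⟨fun j hj hjβ hlo hhi => ?_, fun j hj hjβ heq hsemi => ?_⟩
  · have hjβ' : (j : ℝ) < β := lt_of_le_of_lt (by exact_mod_cast hjβ) hfloor
    rw [phiGap_sub_one hjβ] at hhi
    have hlenj := sub_lt_of_phiGap_lt hlo hlen.1
    have hdiam (u : ℝ) (hu : u ∈ Ω) (v : ℝ) (hv : v ∈ Ω) : v - u < β + 1 - j := by
      linarith [(hIcc hu).1, (hIcc hv).2]
    obtain ⟨x, hx, hrange, hgaps⟩ := exists_strictMono_range_eq_sigmaCP hβ' hβ'1 hsep hj hjβ'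
      hIoo hIcc hdiam hlen.1 hlenj
    exact ⟨x, hx, hrange, hgaps.trans <| consecutiveGaps_sigmaCP_eq_of_lt hβ' hβ'1 hsep hj hjβ'
      hIoo hIcc hdiam hlen.1 hlenj hhi hdense⟩
  · have hjβ' : (j : ℝ) < β := lt_of_le_of_lt (by exact_mod_cast hjβ) hfloor
    rw [phiGap_sub_one hjβ] at heq
    have hdiam (u : ℝ) (hu : u ∈ Ω) (v : ℝ) (hv : v ∈ Ω) : v - u < β + 1 - j :=
      heq ▸ sub_lt_of_mem_Ico_or_Ioc hsemi hu hv
    obtain ⟨x, hx, hrange, hgaps⟩ := exists_strictMono_range_eq_sigmaCP hβ' hβ'1 hsep hj hjβ'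
      hIoo hIcc hdiam hlen.1 (by linarith)
    exact ⟨x, hx, hrange, hgaps.trans <| consecutiveGaps_sigmaCP_eq_of_eq hβ' hβ'1 hsep hj hjβ'
      hsemi hIoo hIcc hdiam hlen.1 heq hdense⟩

/-- Proposition: gaps of `Σ_β(Ω)` for a quadratic Pisot unit `β` and an interval `Ω`
with `|Ω| ∈ (1, β]`: three values `1, j - β′, j + 1 - β′` if
`|Ω| ∈ (φ_j(β), φ_{j-1}(β))`, and exactly the two values `1, j - β′` if
`|Ω| = φ_{j-1}(β)` and `Ω` is semi-closed. -/
theorem cutProject_gap_values (β β' : ℝ) (p : ℤ)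
    (hβ : 1 < β)
    (hp : (1 ≤ p ∧ β ^ 2 = p * β + 1) ∨ (3 ≤ p ∧ β ^ 2 = p * β - 1))
    (hβ' : β' = (p : ℝ) - β)
    (Ω : Set ℝ) (c d : ℝ) (hcd : c < d)
    (hΩ : Ω = Set.Icc c d ∨ Ω = Set.Ico c d ∨ Ω = Set.Ioc c d ∨ Ω = Set.Ioo c d)
    (hlen : 1 < d - c ∧ d - c ≤ β) :
    (∀ j : ℤ, 1 ≤ j → j ≤ ⌊β⌋ →
      phiGap β j < d - c → d - c < phiGap β (j - 1) →
      ∃ x : ℤ → ℝ, StrictMono x ∧ Set.range x = sigmaCP β β' Ω ∧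
        {g : ℝ | ∃ k : ℤ, g = x (k + 1) - x k} =
          ({1, (j : ℝ) - β', (j : ℝ) + 1 - β'} : Set ℝ)) ∧
    (∀ j : ℤ, 1 ≤ j → j ≤ ⌊β⌋ →
      d - c = phiGap β (j - 1) →
      (Ω = Set.Ico c d ∨ Ω = Set.Ioc c d) →
      ∃ x : ℤ → ℝ, StrictMono x ∧ Set.range x = sigmaCP β β' Ω ∧
        {g : ℝ | ∃ k : ℤ, g = x (k + 1) - x k} = ({1, (j : ℝ) - β'} : Set ℝ)) :=
  cutProject_gap_values_general β β' p hβ hp hβ' Ω c d hΩ hlen
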